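/- arXiv:2210.08789 — 2 statements merged into one kernel-verified Lean document; each statement's English description precedes it below -/
import Mathlib

section
/- The statistics asc (number of ascents) and dist (number of distinct nonzero entries) are equidistributed over the set of inversion sequences of length n, and both are distributed like des over Sₙ (i.e., both are Eulerian). -/
open Finset

/-- The next index (used for descent/ascent definitions). -/
def nxt {n : ℕ} (i : Fin n) : Fin n := ⟨(i.1 + 1) % n, Nat.mod_lt _ i.pos⟩

/-- Number of descents of a permutation of `Fin n`. -/
def desP {n : ℕ} (π : Equiv.Perm (Fin n)) : ℕ :=
  (univ.filter fun i : Fin n => i.1 + 1 < n ∧ π (nxt i) < π i).card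

/-- Number of inverse descents. -/
def idesP {n : ℕ} (π : Equiv.Perm (Fin n)) : ℕ := desP π⁻¹

/-- Number of left-to-right maxima. -/
def lmaxP {n : ℕ} (π : Equiv.Perm (Fin n)) : ℕ :=
  (univ.filter fun i : Fin n => ∀ j, j < i → π j < π i).card

/-- Number of left-to-right minima. -/
def lminP {n : ℕ} (π : Equiv.Perm (Fin n)) : ℕ :=
  (univ.filter fun i : Fin n => ∀ j, j < i → π i < π j).card

/-- Number of right-to-left maxima. -/
def rmaxP {n : ℕ} (π : Equiv.Perm (Fin n)) : ℕ :=
  (univ.filter fun i : Fin n => ∀ j, i < j → π j < π i).card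

/-- Inversion sequences of length `n`, encoded as functions `Fin n → Fin n`
with `s i ≤ i` (0-based version of `0 ≤ sᵢ < i`). -/
def InvSeqs (n : ℕ) : Finset (Fin n → Fin n) :=
  univ.filter fun s => ∀ i : Fin n, (s i : ℕ) ≤ i.1

/-- Number of ascents of an inversion sequence. -/
def ascI {n : ℕ} (s : Fin n → Fin n) : ℕ :=
  (univ.filter fun i : Fin n => i.1 + 1 < n ∧ s i < s (nxt i)).card

/-- Number of distinct (nonzero) entries: `|{s₁,…,sₙ}| - 1`. -/
def distI {n : ℕ} (s : Fin n → Fin n) : ℕ := (univ.image s).card - 1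

/-- Number of zero entries. -/
def zeroI {n : ℕ} (s : Fin n → Fin n) : ℕ :=
  (univ.filter fun i : Fin n => (s i : ℕ) = 0).card

/-- Number of maximal entries (`sᵢ = i - 1`, 0-based `s i = i`). -/
def maxI {n : ℕ} (s : Fin n → Fin n) : ℕ :=
  (univ.filter fun i : Fin n => (s i : ℕ) = i.1).card

/-- The set of values of right-to-left minima. -/
def rminValues {n : ℕ} (s : Fin n → Fin n) : Finset ℕ :=
  (univ.filter fun i : Fin n => ∀ j, i < j → s i < s j).image fun i => (s i : ℕ)

/-- Number of right-to-left minima values. -/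
def rminI {n : ℕ} (s : Fin n → Fin n) : ℕ := (rminValues s).card

/-- Number of initial consecutive zeros. -/
def czeroI {n : ℕ} (s : Fin n → Fin n) : ℕ :=
  (univ.filter fun i : Fin n => ∀ j, j ≤ i → (s j : ℕ) = 0).card

/-- Length of the initial run of maximal entries `0,1,2,…`. -/
def cmaxI {n : ℕ} (s : Fin n → Fin n) : ℕ :=
  (univ.filter fun i : Fin n => ∀ j, j ≤ i → (s j : ℕ) = j.1).card

/-- The entry after the last zero (0 if `s` ends with a zero). -/
def ealzI {n : ℕ} (s : Fin n → Fin n) : ℕ :=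
  (univ.filter fun i : Fin n => (s i : ℕ) = 0 ∧ ∀ j, i < j → (s j : ℕ) ≠ 0).sum
    fun i => if h : i.1 + 1 < n then (s ⟨i.1 + 1, h⟩ : ℕ) else 0

/-- The entry after the last maximal entry of the initial run (0 if none). -/
def ealmI {n : ℕ} (s : Fin n → Fin n) : ℕ :=
  if h : cmaxI s < n then (s ⟨cmaxI s, h⟩ : ℕ) else 0

/-- The reverse of the complement of `π`. -/
def crev {n : ℕ} (π : Equiv.Perm (Fin n)) : Equiv.Perm (Fin n) :=
  Fin.revPerm * π * Fin.revPerm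

/-! Both statistics are pulled back from `des` along injections `Sₙ → Iₙ`, which are
bijections because `|Iₙ| = n!`.

For `asc` this is the Lehmer code `i ↦ #{j < i | π j > π i}`, which turns descents into
ascents. It is injective: at the last position where two permutations differ, the same set of values
occupies the positions up to it, and the code counts how many of them exceed the value there.

For `dist`, code each value `v` by one plus the value that follows `v` in the subword of values
`≤ v` (and by `0` if `v` ends that subword). The nonzero codes are exactly `1 + π (i + 1)` for
the descents `i`, so they are `des π` distinct numbers besides `0`, and the permutation is
recovered by inserting the values `0, 1, …` one at a time, each right before the value its code
names. -/

section

variable {n : ℕ}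

theorem val_nxt {i : Fin n} (h : i.1 + 1 < n) : (nxt i).1 = i.1 + 1 := by
  simp [nxt, Nat.mod_eq_of_lt h]

theorem lt_nxt_iff {i j : Fin n} (h : i.1 + 1 < n) : j < nxt i ↔ j ≤ i := by
  rw [Fin.lt_def, Fin.le_def, val_nxt h]
  omega

theorem exists_nxt_eq {j : Fin n} (hj : 0 < j.1) : ∃ i : Fin n, i.1 + 1 < n ∧ nxt i = j :=
  have hlt : j.1 - 1 + 1 < n := by omega
  ⟨⟨j.1 - 1, by omega⟩, hlt, Fin.ext (by rw [val_nxt hlt]; exact Nat.sub_add_cancel hj)⟩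

theorem card_invSeqs (n : ℕ) : #(InvSeqs n) = n.factorial := by
  have hpi : InvSeqs n = Fintype.piFinset fun i : Fin n => Iic i := by
    refine Finset.ext fun s => ?_
    simp only [InvSeqs, mem_filter, mem_univ, true_and, Fintype.mem_piFinset, mem_Iic, Fin.le_def]
  rw [hpi, Fintype.card_piFinset, ← prod_range_add_one_eq_factorial,
    ← Fin.prod_univ_eq_prod_range]
  simp

theorem card_filter_invSeqs_eq_card_filter_perm {f : Equiv.Perm (Fin n) → Fin n → Fin n}
    (hf : Function.Injective f) (hmem : ∀ π, f π ∈ InvSeqs n)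
    {stat : (Fin n → Fin n) → ℕ} {t : Equiv.Perm (Fin n) → ℕ}
    (hstat : ∀ π, stat (f π) = t π)
    (k : ℕ) : #{s ∈ InvSeqs n | stat s = k} = #{π | t π = k} := by
  have himage : univ.image f = InvSeqs n := by
    refine eq_of_subset_of_card_le (image_subset_iff.2 fun π _ => hmem π) ?_
    rw [card_invSeqs, card_image_of_injective _ hf, card_univ, Fintype.card_perm,
      Fintype.card_fin]
  simp_rw [← himage, filter_image, card_image_of_injective _ hf, hstat]

theorem strictAntiOn_card_filter_lt {α : Type*} [LinearOrder α] (s : Finset α) :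
    StrictAntiOn (fun x => #{z ∈ s | x < z}) s := by
  intro x _ y hy hxy
  refine card_lt_card (ssubset_iff.2 ⟨y, by simp, fun z hz => ?_⟩)
  simp only [mem_insert, mem_filter] at hz ⊢
  rcases hz with rfl | ⟨hz, hyz⟩
  exacts [⟨hy, hxy⟩, ⟨hz, hxy.trans hyz⟩]

def lehmerCode (π : Equiv.Perm (Fin n)) (i : Fin n) : Fin n :=
  ⟨#{j ∈ Iio i | π i < π j}, (card_filter_le _ _).trans_lt (by simp)⟩

theorem lehmerCode_mem_invSeqs (π : Equiv.Perm (Fin n)) : lehmerCode π ∈ InvSeqs n := by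
  simp only [InvSeqs, mem_filter, mem_univ, true_and]
  exact fun i => (card_filter_le _ _).trans (Fin.card_Iio i).le

theorem val_lehmerCode (π : Equiv.Perm (Fin n)) (i : Fin n) :
    (lehmerCode π i).1 = #{x ∈ (Iic i).map π.toEmbedding | π i < x} := by
  rw [filter_map, card_map]
  refine congrArg card (Finset.ext fun j => ?_)
  simp only [mem_filter, mem_Iio, mem_Iic, Function.comp_apply, Equiv.coe_toEmbedding]
  exact ⟨fun h => ⟨h.1.le, h.2⟩,
    fun h => ⟨h.1.lt_of_ne (by rintro rfl; exact h.2.false), h.2⟩⟩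

theorem map_Iic_eq_of_eqOn_Ioi {α : Type*} [LinearOrder α] [LocallyFiniteOrderBot α]
    {π σ : Equiv.Perm α} {i : α} (h : ∀ j, i < j → π j = σ j) :
    (Iic i).map π.toEmbedding = (Iic i).map σ.toEmbedding := by
  have key {π σ : Equiv.Perm α} (h : ∀ j, i < j → π j = σ j) (x : α)
      (hx : i < π.symm x) : i < σ.symm x := by
    rwa [show σ.symm x = π.symm x by rw [Equiv.symm_apply_eq, ← h _ hx, Equiv.apply_symm_apply]]
  ext x
  simp only [mem_map_equiv, mem_Iic, ← not_lt]
  exact not_congr ⟨key h x, key (fun j hj => (h j hj).symm) x⟩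

theorem lehmerCode_injective : Function.Injective (lehmerCode (n := n)) := by
  intro π σ h
  refine Equiv.ext fun i => ?_
  induction i using WellFoundedGT.induction with | _ i ih
  have hcode := congrArg Fin.val (congrFun h i)
  have hprefix := map_Iic_eq_of_eqOn_Ioi ih
  rw [val_lehmerCode, val_lehmerCode, hprefix] at hcode
  refine (strictAntiOn_card_filter_lt _).injOn ?_ (by simp) hcode
  simp [← hprefix]

theorem lehmerCode_lt_lehmerCode_nxt_iff (π : Equiv.Perm (Fin n)) {i : Fin n}
    (h : i.1 + 1 < n) : lehmerCode π i < lehmerCode π (nxt i) ↔ π (nxt i) < π i := by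
  have hi : i < nxt i := (lt_nxt_iff h).2 le_rfl
  rw [Fin.lt_def]
  simp only [lehmerCode]
  rcases lt_or_gt_of_ne (π.injective.ne hi.ne') with hdesc | hasc
  · simp only [hdesc, iff_true]
    refine card_lt_card (ssubset_iff.2 ⟨i, by simp, fun j hj => ?_⟩)
    simp only [mem_insert, mem_filter, mem_Iio] at hj ⊢
    rcases hj with rfl | ⟨hji, hj⟩
    exacts [⟨hi, hdesc⟩, ⟨hji.trans hi, hdesc.trans hj⟩]
  · simp only [hasc.not_gt, iff_false, not_lt]
    refine card_le_card fun j hj => ?_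
    simp only [mem_filter, mem_Iio, lt_nxt_iff h] at hj ⊢
    obtain rfl | hji := hj.1.eq_or_lt
    · exact absurd hj.2 hasc.not_gt
    · exact ⟨hji, hasc.trans hj.2⟩

theorem ascI_lehmerCode (π : Equiv.Perm (Fin n)) : ascI (lehmerCode π) = desP π := by
  unfold ascI desP
  refine congrArg card (filter_congr fun i _ => ?_)
  exact and_congr_right (lehmerCode_lt_lehmerCode_nxt_iff π)

def descents (π : Equiv.Perm (Fin n)) : Finset (Fin n) :=
  {i | i.1 + 1 < n ∧ π (nxt i) < π i}

@[simp]
theorem mem_descents {π : Equiv.Perm (Fin n)} {i : Fin n} :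
    i ∈ descents π ↔ i.1 + 1 < n ∧ π (nxt i) < π i := by
  simp [descents]

theorem card_descents (π : Equiv.Perm (Fin n)) : #(descents π) = desP π := rfl

def rightSmaller (π : Equiv.Perm (Fin n)) (v : Fin n) : Finset (Fin n) :=
  {j | π.symm v < j ∧ π j < v}

@[simp]
theorem mem_rightSmaller {π : Equiv.Perm (Fin n)} {v j : Fin n} :
    j ∈ rightSmaller π v ↔ π.symm v < j ∧ π j < v := by
  simp [rightSmaller]

/-- Read off after erasing from `π` all values larger than `v`: one plus the value that then
follows `v`, or `0` if `v` comes last. -/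
def nextSmallerCode (π : Equiv.Perm (Fin n)) (v : Fin n) : Fin n :=
  if h : (rightSmaller π v).Nonempty then
    ⟨π ((rightSmaller π v).min' h) + 1, by
      have := (mem_rightSmaller.1 ((rightSmaller π v).min'_mem h)).2
      omega⟩
  else ⟨0, v.pos⟩

theorem val_nextSmallerCode_of_nonempty (π : Equiv.Perm (Fin n)) {v : Fin n}
    (h : (rightSmaller π v).Nonempty) :
    (nextSmallerCode π v).1 = π ((rightSmaller π v).min' h) + 1 := by
  rw [nextSmallerCode, dif_pos h]

theorem val_nextSmallerCode_eq_zero_iff (π : Equiv.Perm (Fin n)) {v : Fin n} :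
    (nextSmallerCode π v).1 = 0 ↔ ¬ (rightSmaller π v).Nonempty := by
  by_cases h : (rightSmaller π v).Nonempty
  · simp [val_nextSmallerCode_of_nonempty π h, h]
  · simp [nextSmallerCode, h]

theorem nextSmallerCode_mem_invSeqs (π : Equiv.Perm (Fin n)) :
    nextSmallerCode π ∈ InvSeqs n := by
  simp only [InvSeqs, mem_filter, mem_univ, true_and]
  intro v
  by_cases h : (rightSmaller π v).Nonempty
  · rw [val_nextSmallerCode_of_nonempty π h]
    exact (mem_rightSmaller.1 ((rightSmaller π v).min'_mem h)).2
  · simp [nextSmallerCode, h]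

theorem val_nextSmallerCode_of_mem_descents (π : Equiv.Perm (Fin n)) {i : Fin n}
    (hi : i ∈ descents π) : (nextSmallerCode π (π i)).1 = π (nxt i) + 1 := by
  obtain ⟨h, hd⟩ := mem_descents.1 hi
  have hmem : nxt i ∈ rightSmaller π (π i) := by simpa using ⟨(lt_nxt_iff h).2 le_rfl, hd⟩
  have hmin : (rightSmaller π (π i)).min' ⟨_, hmem⟩ = nxt i :=
    le_antisymm (min'_le _ _ hmem) <| le_min' _ _ _ fun j hj =>
      not_lt.1 fun hlt => ((lt_nxt_iff h).1 hlt).not_gt (by simpa using (mem_rightSmaller.1 hj).1)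
  rw [val_nextSmallerCode_of_nonempty π ⟨_, hmem⟩, hmin]

theorem injOn_nextSmallerCode_descents (π : Equiv.Perm (Fin n)) :
    Set.InjOn (fun i => nextSmallerCode π (π i)) (descents π) := by
  intro i hi i' hi' h
  have hval : (π (nxt i)).1 = (π (nxt i')).1 := by
    have := congrArg Fin.val h
    simp only [val_nextSmallerCode_of_mem_descents π hi,
      val_nextSmallerCode_of_mem_descents π hi'] at this
    omega
  have hnxt := congrArg Fin.val (π.injective (Fin.ext hval))
  rw [val_nxt (mem_descents.1 hi).1, val_nxt (mem_descents.1 hi').1] at hnxt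
  exact Fin.ext (by omega)

/-- The position preceding the first smaller value to the right of `v` is a descent. -/
theorem exists_mem_descents_nextSmallerCode_eq (π : Equiv.Perm (Fin n)) {v : Fin n}
    (h : (rightSmaller π v).Nonempty) :
    ∃ i ∈ descents π, nextSmallerCode π (π i) = nextSmallerCode π v := by
  obtain ⟨hvj, hjv⟩ := mem_rightSmaller.1 ((rightSmaller π v).min'_mem h)
  obtain ⟨i, hi, hij⟩ := exists_nxt_eq (j := (rightSmaller π v).min' h)
    (by have := Fin.lt_def.1 hvj; omega)
  rw [← hij] at hvj hjv
  have hvi : v ≤ π i := by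
    obtain hle | hlt := ((lt_nxt_iff hi).1 hvj).eq_or_lt
    · rw [← hle, Equiv.apply_symm_apply]
    · by_contra hiv
      exact (min'_le _ i (mem_rightSmaller.2 ⟨hlt, not_le.1 hiv⟩)).not_gt
        (hij ▸ (lt_nxt_iff hi).2 le_rfl)
  have hd : i ∈ descents π := mem_descents.2 ⟨hi, hjv.trans_le hvi⟩
  exact ⟨i, hd, Fin.ext <| by
    rw [val_nextSmallerCode_of_mem_descents π hd, val_nextSmallerCode_of_nonempty π h, hij]⟩

theorem erase_zero_image_nextSmallerCode (π : Equiv.Perm (Fin n)) (hn : 0 < n) :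
    (univ.image (nextSmallerCode π)).erase ⟨0, hn⟩ =
      (descents π).image fun i => nextSmallerCode π (π i) := by
  ext x
  simp only [mem_erase, mem_image, mem_univ, true_and]
  constructor
  · rintro ⟨hx, v, rfl⟩
    refine exists_mem_descents_nextSmallerCode_eq π ?_
    by_contra hv
    exact hx (Fin.ext ((val_nextSmallerCode_eq_zero_iff π).2 hv))
  · rintro ⟨i, hi, rfl⟩
    refine ⟨fun h0 => ?_, π i, rfl⟩
    simpa [val_nextSmallerCode_of_mem_descents π hi] using congrArg Fin.val h0

theorem zero_mem_image_nextSmallerCode (π : Equiv.Perm (Fin n)) (hn : 0 < n) :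
    ⟨0, hn⟩ ∈ univ.image (nextSmallerCode π) := by
  refine mem_image.2 ⟨π ⟨n - 1, by omega⟩, mem_univ _, Fin.ext ?_⟩
  refine (val_nextSmallerCode_eq_zero_iff π).2 fun ⟨j, hj⟩ => ?_
  have hlast : n - 1 < j.1 := Fin.lt_def.1 (by simpa using (mem_rightSmaller.1 hj).1)
  omega

theorem distI_nextSmallerCode (π : Equiv.Perm (Fin n)) : distI (nextSmallerCode π) = desP π := by
  rcases Nat.eq_zero_or_pos n with rfl | hn
  · rfl
  rw [distI, ← card_erase_of_mem (zero_mem_image_nextSmallerCode π hn),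
    erase_zero_image_nextSmallerCode π hn, card_image_of_injOn (injOn_nextSmallerCode_descents π),
    card_descents]

theorem symm_lt_symm_iff_of_forall_lt {α : Type*} [LinearOrder α] {π σ : Equiv.Perm α}
    {s : Set α}
    (h : ∀ a ∈ s, ∀ b ∈ s, a < b → (π.symm b < π.symm a ↔ σ.symm b < σ.symm a))
    {a b : α} (ha : a ∈ s) (hb : b ∈ s) : π.symm a < π.symm b ↔ σ.symm a < σ.symm b := by
  rcases lt_trichotomy a b with hab | rfl | hab
  · rw [lt_iff_not_ge, lt_iff_not_ge, le_iff_lt_or_eq, le_iff_lt_or_eq, h a ha b hb hab,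
      π.symm.injective.eq_iff, σ.symm.injective.eq_iff]
  · simp
  · exact h b hb a ha hab

/-- The code of `v` names the value `b` following `v` among the values `≤ v`; a smaller `u`
lies after `v` iff `u = b` or `u` lies after `b`. -/
theorem symm_lt_of_nextSmallerCode_eq {π σ : Equiv.Perm (Fin n)}
    (h : nextSmallerCode π = nextSmallerCode σ) {u v : Fin n} (huv : u < v)
    (hπ : π.symm v < π.symm u)
    (hbelow : ∀ a < v, ∀ b < v, π.symm a < π.symm b → σ.symm a < σ.symm b) :
    σ.symm v < σ.symm u := by
  have hu : π.symm u ∈ rightSmaller π v := by simpa using ⟨hπ, huv⟩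
  have hne : (rightSmaller π v).Nonempty := ⟨_, hu⟩
  obtain ⟨-, hjv⟩ := mem_rightSmaller.1 ((rightSmaller π v).min'_mem hne)
  have hcode := val_nextSmallerCode_of_nonempty π hne
  have hne' : (rightSmaller σ v).Nonempty := by
    by_contra hne'
    rw [h, (val_nextSmallerCode_eq_zero_iff σ).2 hne'] at hcode
    omega
  rw [h, val_nextSmallerCode_of_nonempty σ hne', Nat.add_right_cancel_iff] at hcode
  have hσb : σ.symm v < σ.symm (π ((rightSmaller π v).min' hne)) := by
    rw [← Fin.ext hcode, Equiv.symm_apply_apply]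
    exact (mem_rightSmaller.1 ((rightSmaller σ v).min'_mem hne')).1
  rcases eq_or_ne (π ((rightSmaller π v).min' hne)) u with hbu | hbu
  · rwa [hbu] at hσb
  · refine hσb.trans (hbelow _ hjv _ huv ?_)
    rw [Equiv.symm_apply_apply]
    exact (min'_le _ _ hu).lt_of_ne fun hj => hbu (by rw [hj, Equiv.apply_symm_apply])

theorem nextSmallerCode_injective : Function.Injective (nextSmallerCode (n := n)) := by
  intro π σ h
  have hagree : ∀ v u : Fin n, u < v → (π.symm v < π.symm u ↔ σ.symm v < σ.symm u) := by
    intro v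
    induction v using WellFoundedLT.induction with | _ v ih
    have hbelow {a b : Fin n} (ha : a < v) (hb : b < v) :
        π.symm a < π.symm b ↔ σ.symm a < σ.symm b :=
      symm_lt_symm_iff_of_forall_lt (s := Set.Iio v) (fun a ha b _ hab => ih b ‹_› a hab) ha hb
    exact fun u huv => ⟨fun hπ => symm_lt_of_nextSmallerCode_eq h huv hπ
      fun a ha b hb => (hbelow ha hb).1, fun hσ => symm_lt_of_nextSmallerCode_eq h.symm huv hσ
      fun a ha b hb => (hbelow ha hb).2⟩
  have hmono : StrictMono (σ.symm ∘ π) := fun x y hxy => by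
    simpa using (symm_lt_symm_iff_of_forall_lt (s := Set.univ)
      (fun a _ b _ hab => hagree b a hab) trivial trivial (a := π x) (b := π y)).1 (by simpa)
  exact Equiv.ext fun x => (Equiv.symm_apply_eq σ).1 (congrFun hmono.eq_id x)

end

/-- `asc` and `dist` are equidistributed over `Iₙ`, and both are Eulerian. -/
theorem asc_dist_eulerian (n k : ℕ) :
    ((InvSeqs n).filter fun s => ascI s = k).card =
      ((InvSeqs n).filter fun s => distI s = k).card ∧
    ((InvSeqs n).filter fun s => ascI s = k).card =
      (univ.filter fun π : Equiv.Perm (Fin n) => desP π = k).card := by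
  have hasc := card_filter_invSeqs_eq_card_filter_perm (n := n) lehmerCode_injective
    lehmerCode_mem_invSeqs ascI_lehmerCode k
  have hdist := card_filter_invSeqs_eq_card_filter_perm (n := n) nextSmallerCode_injective
    nextSmallerCode_mem_invSeqs distI_nextSmallerCode k
  exact ⟨hasc.trans hdist.symm, hasc⟩
end

section
/- The statistic max (number of maximal entries, i.e., positions i with sᵢ = i−1) over inversion sequences of length n is a Stirling statistic: for every k, |{s ∈ Iₙ : max(s) = k}| equals the coefficient of x^k in x(x+1)⋯(x+n−1). -/
open Finset

/- Inversion sequences form the product `∏ᵢ {0, …, i}`, and `maxI` counts the coordinates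
taking their largest value. Weighting that value by `X` and every other one by `1`, the
generating polynomial of `maxI` factors as `∏ᵢ (X + i)`. -/

open Polynomial

theorem invSeqs_eq_piFinset (n : ℕ) :
    InvSeqs n = Fintype.piFinset fun i : Fin n => Iic i := by
  ext s
  simp only [InvSeqs, mem_filter, mem_univ, true_and, Fintype.mem_piFinset, mem_Iic, Fin.le_def]

theorem sum_Iic_ite_eq {M : Type*} [AddCommMonoidWithOne M] {n : ℕ} (i : Fin n) (a : M) :
    ∑ v ∈ Iic i, (if v = i then a else 1) = a + i := by
  rw [← Iio_insert, sum_insert notMem_Iio_self, if_pos rfl,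
    sum_congr rfl fun v hv => if_neg (mem_Iio.mp hv).ne, sum_const, Fin.card_Iio, nsmul_one]

theorem pow_maxI {M : Type*} [CommMonoid M] {n : ℕ} (s : Fin n → Fin n) (a : M) :
    a ^ maxI s = ∏ i, if s i = i then a else 1 := by
  simp only [maxI, Fin.val_inj, ← prod_const, prod_filter]

theorem sum_invSeqs_X_pow_maxI (R : Type*) [CommSemiring R] (n : ℕ) :
    ∑ s ∈ InvSeqs n, (X : R[X]) ^ maxI s = ∏ j ∈ range n, (X + (j : R[X])) := by
  simp only [invSeqs_eq_piFinset, pow_maxI]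
  rw [← prod_univ_sum (fun i => Iic i) fun i v => if v = i then (X : R[X]) else 1]
  simp only [sum_Iic_ite_eq]
  exact Fin.prod_univ_eq_prod_range (fun j => X + (j : R[X])) n

theorem coeff_sum_X_pow {R ι : Type*} [Semiring R] (S : Finset ι) (f : ι → ℕ) (k : ℕ) :
    (∑ a ∈ S, (X : R[X]) ^ f a).coeff k = #{a ∈ S | f a = k} := by
  simp only [finsetSum_coeff, coeff_X_pow, sum_boole, eq_comm]

/-- `max` on inversion sequences is a Stirling statistic. -/
theorem max_is_stirling (n k : ℕ) :
    ((InvSeqs n).filter fun s => maxI s = k).card =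
      ((∏ j ∈ Finset.range n, (Polynomial.X + Polynomial.C j) : Polynomial ℕ)).coeff k := by
  rw [← Nat.cast_id #_, ← coeff_sum_X_pow, sum_invSeqs_X_pow_maxI]
  simp only [← C_eq_natCast, Nat.cast_id]
end
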